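/- arXiv:2005.12506 — 9 statements merged into one kernel-verified Lean document; each statement's English description precedes it below -/
import Mathlib

section
/- If V* ⊆ V is a maximal independent set of G of size k, then the strategy x* defined by x*_i = 1/k for i ∈ V* and x*_i = 0 otherwise is a Nash equilibrium of the social distancing game on G, with equilibrium contact value λ* = 1/k. -/
open Matrix Finset

/-- Theorem 2.2: the uniform strategy on a maximal independent set is a Nash
equilibrium of the social distancing game, with minimal contact 1/k. -/
theorem stmt_1 (n : ℕ) (A : Matrix (Fin n) (Fin n) ℝ)
    (hsym : A.IsSymm)
    (h01 : ∀ i j, A i j = 0 ∨ A i j = 1)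
    (hdiag : ∀ i, A i i = 1)
    (Vs : Finset (Fin n)) (hne : Vs.Nonempty)
    (hindep : ∀ i ∈ Vs, ∀ j ∈ Vs, i ≠ j → A i j = 0)
    (hmax : ∀ i, i ∉ Vs → ∃ j ∈ Vs, A i j = 1)
    (xstar : Fin n → ℝ)
    (hxstar : xstar = fun i => if i ∈ Vs then ((Vs.card : ℝ))⁻¹ else 0) :
    xstar ∈ stdSimplex ℝ (Fin n) ∧
    (∀ x ∈ stdSimplex ℝ (Fin n),
        xstar ⬝ᵥ A.mulVec xstar ≤ x ⬝ᵥ A.mulVec xstar) ∧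
    xstar ⬝ᵥ A.mulVec xstar = ((Vs.card : ℝ))⁻¹ := by
  have hk : (0:ℝ) < (Vs.card : ℝ) := by
    exact_mod_cast Finset.card_pos.mpr hne
  have hki : (0:ℝ) < ((Vs.card : ℝ))⁻¹ := inv_pos.mpr hk
  have hAnn : ∀ i j, (0:ℝ) ≤ A i j := by
    intro i j; rcases h01 i j with h | h <;> simp [h]
  -- mulVec formula
  have hmv : ∀ i, A.mulVec xstar i = ∑ j ∈ Vs, A i j * ((Vs.card : ℝ))⁻¹ := by
    intro i
    rw [hxstar, Matrix.mulVec, dotProduct]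
    simp only [mul_ite, mul_zero]
    rw [Finset.sum_ite_mem, Finset.univ_inter]
  have hmvVs : ∀ i ∈ Vs, A.mulVec xstar i = ((Vs.card : ℝ))⁻¹ := by
    intro i hi
    rw [hmv i, Finset.sum_eq_single i
      (fun j hj hne' => by rw [hindep i hi j hj (Ne.symm hne')]; ring)
      (fun h => absurd hi h)]
    rw [hdiag i, one_mul]
  have hmvge : ∀ i, ((Vs.card : ℝ))⁻¹ ≤ A.mulVec xstar i := by
    intro i
    by_cases hi : i ∈ Vs
    · rw [hmvVs i hi]
    · obtain ⟨j, hj, hAij⟩ := hmax i hi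
      rw [hmv i]
      calc ((Vs.card : ℝ))⁻¹ = A i j * ((Vs.card : ℝ))⁻¹ := by rw [hAij, one_mul]
        _ ≤ ∑ j ∈ Vs, A i j * ((Vs.card : ℝ))⁻¹ :=
          Finset.single_le_sum (fun m _ => mul_nonneg (hAnn i m) hki.le) hj
  have hsimplex : xstar ∈ stdSimplex ℝ (Fin n) := by
    constructor
    · intro i; rw [hxstar]; by_cases hi : i ∈ Vs <;> simp [hi, hki.le]
    · rw [hxstar]
      rw [Finset.sum_ite_mem, Finset.univ_inter, Finset.sum_const, nsmul_eq_mul,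
        mul_inv_cancel₀ hk.ne']
  have hval : xstar ⬝ᵥ A.mulVec xstar = ((Vs.card : ℝ))⁻¹ := by
    rw [dotProduct]
    have : ∀ i, xstar i * A.mulVec xstar i = xstar i * ((Vs.card : ℝ))⁻¹ := by
      intro i
      by_cases hi : i ∈ Vs
      · rw [hmvVs i hi]
      · simp [hxstar, hi]
    rw [Finset.sum_congr rfl (fun i _ => this i), ← Finset.sum_mul, hsimplex.2, one_mul]
  refine ⟨hsimplex, ?_, hval⟩
  intro x hx
  rw [hval]
  calc ((Vs.card : ℝ))⁻¹ = (∑ i, x i) * ((Vs.card : ℝ))⁻¹ := by rw [hx.2, one_mul]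
    _ = ∑ i, x i * ((Vs.card : ℝ))⁻¹ := by rw [Finset.sum_mul]
    _ ≤ ∑ i, x i * A.mulVec xstar i :=
      Finset.sum_le_sum (fun i _ => mul_le_mul_of_nonneg_left (hmvge i) (hx.1 i))
    _ = x ⬝ᵥ A.mulVec xstar := rfl
end

section
/- If x* is a strategy supported on an independent set V* of G that is not maximal (i.e., some vertex outside V* has no neighbor in V*), then x* is not a Nash equilibrium of the social distancing game on G. -/
open Matrix Finset

/-- A strategy supported on a non-maximal independent set is not a Nash
equilibrium of the social distancing game. -/
theorem stmt_2 (n : ℕ) (A : Matrix (Fin n) (Fin n) ℝ)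
    (hsym : A.IsSymm)
    (h01 : ∀ i j, A i j = 0 ∨ A i j = 1)
    (hdiag : ∀ i, A i i = 1)
    (Vs : Finset (Fin n))
    (hindep : ∀ i ∈ Vs, ∀ j ∈ Vs, i ≠ j → A i j = 0)
    (hnotmax : ∃ v, v ∉ Vs ∧ ∀ j ∈ Vs, A v j = 0)
    (xstar : Fin n → ℝ) (hx : xstar ∈ stdSimplex ℝ (Fin n))
    (hsupp : ∀ i, 0 < xstar i ↔ i ∈ Vs) :
    ¬ (∀ x ∈ stdSimplex ℝ (Fin n),
        xstar ⬝ᵥ A.mulVec xstar ≤ x ⬝ᵥ A.mulVec xstar) := by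
  obtain ⟨v, hv, hvj⟩ := hnotmax
  obtain ⟨hnn, hsum⟩ := hx
  intro hNE
  -- zero outside support
  have hzero : ∀ j, j ∉ Vs → xstar j = 0 := fun j hj => by
    have := hnn j
    rcases this.lt_or_eq with h | h
    · exact absurd ((hsupp j).mp h) hj
    · exact h.symm
  have hAnn : ∀ i j, 0 ≤ A i j := fun i j => by
    rcases h01 i j with h | h <;> simp [h]
  -- deviation payoff is 0
  have hdev : (Pi.single v 1 : Fin n → ℝ) ⬝ᵥ A.mulVec xstar = 0 := by
    have h1 : (Pi.single v 1 : Fin n → ℝ) ⬝ᵥ A.mulVec xstar = A.mulVec xstar v := by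
      simp [dotProduct, Pi.single_apply]
    rw [h1, mulVec, dotProduct]
    apply Finset.sum_eq_zero
    intro j _
    by_cases hj : j ∈ Vs
    · simp [hvj j hj]
    · simp [hzero j hj]
  have hmem : (Pi.single v 1 : Fin n → ℝ) ∈ stdSimplex ℝ (Fin n) := by
    constructor
    · intro i; rw [Pi.single_apply]; split_ifs <;> norm_num
    · simp [Pi.single_apply]
  -- current payoff positive
  obtain ⟨i0, _, hi0⟩ := Finset.exists_lt_of_sum_lt (s := Finset.univ)
    (f := fun _ : Fin n => (0:ℝ)) (g := xstar) (by simp [hsum])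
  have hAxnn : ∀ i, 0 ≤ A.mulVec xstar i := fun i => by
    rw [mulVec, dotProduct]
    exact Finset.sum_nonneg fun j _ => mul_nonneg (hAnn i j) (hnn j)
  have hAxpos : xstar i0 ≤ A.mulVec xstar i0 := by
    rw [mulVec, dotProduct]
    calc xstar i0 = A i0 i0 * xstar i0 := by rw [hdiag]; ring
    _ ≤ ∑ j, A i0 j * xstar j :=
      Finset.single_le_sum (fun j _ => mul_nonneg (hAnn i0 j) (hnn j)) (Finset.mem_univ i0)
  have hpos : 0 < xstar ⬝ᵥ A.mulVec xstar := by
    rw [dotProduct]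
    have : 0 < xstar i0 * A.mulVec xstar i0 :=
      mul_pos hi0 (lt_of_lt_of_le hi0 hAxpos)
    exact lt_of_lt_of_le this
      (Finset.single_le_sum (fun j _ => mul_nonneg (hnn j) (hAxnn j)) (Finset.mem_univ i0))
  have := hNE _ hmem
  rw [hdev] at this
  linarith
end

section
/- Let G* = (V*,E*) be an induced subgraph of G that is r-regular with |V*| = k, and suppose every vertex i ∈ V \ V* has at least r+1 neighbors in V*. Then the strategy x* with x*_i = 1/k for i ∈ V* and x*_i = 0 otherwise is a Nash equilibrium of the social distancing game on G, with equilibrium contact value λ* = (r+1)/k. -/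
/-!
Against the uniform strategy `x*` on `V*`, the payoff of a pure strategy `i` is
`(A x*)ᵢ = #(closed neighbourhood of i in V*) / k`. Regularity together with `Aᵢᵢ = 1` makes this
exactly `(r + 1) / k` on `V*`, and the hypothesis on outside vertices makes it at least
`(r + 1) / k` elsewhere. So `x*` is supported where `A x*` attains its minimum, which is the
equilibrium condition of this minimisation game.
-/

open Matrix Finset

section Simplex

variable {ι : Type*} [Fintype ι]

theorem le_dotProduct_of_mem_stdSimplex {x v : ι → ℝ} {c : ℝ} (hx : x ∈ stdSimplex ℝ ι)
    (hv : ∀ i, c ≤ v i) : c ≤ x ⬝ᵥ v :=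
  calc c = ∑ i, x i * c := by rw [← Finset.sum_mul, hx.2, one_mul]
    _ ≤ ∑ i, x i * v i := Finset.sum_le_sum fun i _ => mul_le_mul_of_nonneg_left (hv i) (hx.1 i)

theorem dotProduct_eq_of_mem_stdSimplex {x v : ι → ℝ} {c : ℝ} (hx : x ∈ stdSimplex ℝ ι)
    (hv : ∀ i, x i ≠ 0 → v i = c) : x ⬝ᵥ v = c :=
  calc x ⬝ᵥ v = ∑ i, x i * c := Finset.sum_congr rfl fun i _ => by
        by_cases hxi : x i = 0
        · simp [hxi]
        · rw [hv i hxi]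
    _ = c := by rw [← Finset.sum_mul, hx.2, one_mul]

/-- Players minimise `π(x, y) = xᵀ A y`, so this is the equilibrium condition: a strategy supported
on pure strategies of minimal payoff against it is a best reply to itself. -/
theorem dotProduct_mulVec_self_le_of_support_minimal {A : Matrix ι ι ℝ} {y : ι → ℝ} {c : ℝ}
    (hy : y ∈ stdSimplex ℝ ι) (hge : ∀ i, c ≤ (A *ᵥ y) i) (heq : ∀ i, y i ≠ 0 → (A *ᵥ y) i = c) :
    (∀ x ∈ stdSimplex ℝ ι, y ⬝ᵥ A *ᵥ y ≤ x ⬝ᵥ A *ᵥ y) ∧ y ⬝ᵥ A *ᵥ y = c := by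
  have hval := dotProduct_eq_of_mem_stdSimplex hy heq
  exact ⟨fun x hx => hval ▸ le_dotProduct_of_mem_stdSimplex hx hge, hval⟩

variable [DecidableEq ι]

theorem ite_mem_inv_card_mem_stdSimplex {s : Finset ι} (hs : s.Nonempty) :
    (fun i => if i ∈ s then ((#s : ℝ))⁻¹ else 0) ∈ stdSimplex ℝ ι := by
  refine ⟨fun i => by positivity, ?_⟩
  rw [Finset.sum_ite_mem, Finset.univ_inter, Finset.sum_const, nsmul_eq_mul]
  exact mul_inv_cancel₀ (Nat.cast_ne_zero.mpr hs.card_pos.ne')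

theorem mulVec_ite_mem_inv_card (A : Matrix ι ι ℝ) (s : Finset ι) (i : ι) :
    (A *ᵥ fun j => if j ∈ s then ((#s : ℝ))⁻¹ else 0) i = (∑ j ∈ s, A i j) / #s := by
  simp only [mulVec, dotProduct, mul_ite, mul_zero]
  rw [Finset.sum_ite_mem, Finset.univ_inter, ← Finset.sum_mul, div_eq_mul_inv]

end Simplex

theorem sum_eq_card_filter_of_zero_or_one {ι : Type*} (s : Finset ι) {f : ι → ℝ}
    (hf : ∀ j, f j = 0 ∨ f j = 1) : ∑ j ∈ s, f j = #(s.filter (fun j => f j = 1)) := by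
  rw [Finset.natCast_card_filter]
  refine Finset.sum_congr rfl fun j _ => ?_
  rcases hf j with h | h <;> simp [h]

theorem card_filter_eq_card_filter_ne_add_one {ι : Type*} [DecidableEq ι] {s : Finset ι}
    {p : ι → Prop} [DecidablePred p] {i : ι} (hi : i ∈ s) (hp : p i) :
    #(s.filter p) = #(s.filter (fun j => j ≠ i ∧ p j)) + 1 := by
  have herase : (s.filter p).erase i = s.filter (fun j => j ≠ i ∧ p j) := by
    ext j
    simp only [Finset.mem_erase, Finset.mem_filter]
    tauto
  rw [← herase, Finset.card_erase_add_one (Finset.mem_filter.mpr ⟨hi, hp⟩)]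

theorem stmt_3_general (n : ℕ) (A : Matrix (Fin n) (Fin n) ℝ)
    (h01 : ∀ i j, A i j = 0 ∨ A i j = 1)
    (hdiag : ∀ i, A i i = 1)
    (r : ℕ) (Vs : Finset (Fin n)) (hne : Vs.Nonempty)
    (hreg : ∀ i ∈ Vs, (Vs.filter (fun j => j ≠ i ∧ A i j = 1)).card = r)
    (hout : ∀ i, i ∉ Vs → r + 1 ≤ (Vs.filter (fun j => A i j = 1)).card)
    (xstar : Fin n → ℝ)
    (hxstar : xstar = fun i => if i ∈ Vs then ((Vs.card : ℝ))⁻¹ else 0) :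
    xstar ∈ stdSimplex ℝ (Fin n) ∧
    (∀ x ∈ stdSimplex ℝ (Fin n),
        xstar ⬝ᵥ A.mulVec xstar ≤ x ⬝ᵥ A.mulVec xstar) ∧
    xstar ⬝ᵥ A.mulVec xstar = (r + 1 : ℝ) / (Vs.card : ℝ) := by
  have hpayoff i : (A *ᵥ xstar) i = #(Vs.filter (fun j => A i j = 1)) / #Vs := by
    rw [hxstar, mulVec_ite_mem_inv_card, sum_eq_card_filter_of_zero_or_one Vs (h01 i)]
  have hclosed i (hi : i ∈ Vs) : #(Vs.filter (fun j => A i j = 1)) = r + 1 :=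
    hreg i hi ▸ card_filter_eq_card_filter_ne_add_one hi (hdiag i)
  have hin i (hi : i ∈ Vs) : (A *ᵥ xstar) i = ((r : ℝ) + 1) / #Vs := by
    rw [hpayoff, hclosed i hi]
    push_cast; rfl
  have hge i : ((r : ℝ) + 1) / #Vs ≤ (A *ᵥ xstar) i := by
    by_cases hi : i ∈ Vs
    · exact (hin i hi).ge
    · rw [hpayoff]; gcongr; exact_mod_cast hout i hi
  have heq i (hi : xstar i ≠ 0) : (A *ᵥ xstar) i = ((r : ℝ) + 1) / #Vs :=
    hin i (of_not_not fun h => hi (by simp [hxstar, h]))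
  have hsimplex : xstar ∈ stdSimplex ℝ (Fin n) := hxstar ▸ ite_mem_inv_card_mem_stdSimplex hne
  exact ⟨hsimplex, dotProduct_mulVec_self_le_of_support_minimal hsimplex hge heq⟩

/-- Theorem 2.3: the uniform strategy on a maximal r-regular subnetwork, such
that every outside node has at least r+1 links into it, is a Nash equilibrium
with minimal contact (r+1)/k. -/
theorem stmt_3 (n : ℕ) (A : Matrix (Fin n) (Fin n) ℝ)
    (hsym : A.IsSymm)
    (h01 : ∀ i j, A i j = 0 ∨ A i j = 1)
    (hdiag : ∀ i, A i i = 1)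
    (r : ℕ) (Vs : Finset (Fin n)) (hne : Vs.Nonempty)
    (hreg : ∀ i ∈ Vs, (Vs.filter (fun j => j ≠ i ∧ A i j = 1)).card = r)
    (hout : ∀ i, i ∉ Vs → r + 1 ≤ (Vs.filter (fun j => A i j = 1)).card)
    (xstar : Fin n → ℝ)
    (hxstar : xstar = fun i => if i ∈ Vs then ((Vs.card : ℝ))⁻¹ else 0) :
    xstar ∈ stdSimplex ℝ (Fin n) ∧
    (∀ x ∈ stdSimplex ℝ (Fin n),
        xstar ⬝ᵥ A.mulVec xstar ≤ x ⬝ᵥ A.mulVec xstar) ∧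
    xstar ⬝ᵥ A.mulVec xstar = (r + 1 : ℝ) / (Vs.card : ℝ) :=
  stmt_3_general n A h01 hdiag r Vs hne hreg hout xstar hxstar
end

section
/- If x* is the uniform equilibrium strategy supported on a maximal independent set V* of G, then x* is strongly rigid: for every direction d = x − x* with x ∈ S, x ≠ x*, and x_i > 0 for all i ∈ V*, and for all sufficiently small ε > 0, one has (x*+εd)ᵀA(x*+εd) > x*ᵀAx*. -/
open Matrix Finset

/-- Theorem 3.1: the uniform equilibrium strategy on a maximal independent set
is strongly rigid: any small support-preserving perturbation strictly increases
the social contact. -/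
theorem stmt_4 (n : ℕ) (A : Matrix (Fin n) (Fin n) ℝ)
    (hsym : A.IsSymm)
    (h01 : ∀ i j, A i j = 0 ∨ A i j = 1)
    (hdiag : ∀ i, A i i = 1)
    (Vs : Finset (Fin n)) (hne : Vs.Nonempty)
    (hindep : ∀ i ∈ Vs, ∀ j ∈ Vs, i ≠ j → A i j = 0)
    (hmax : ∀ i, i ∉ Vs → ∃ j ∈ Vs, A i j = 1)
    (xstar : Fin n → ℝ)
    (hxstar : xstar = fun i => if i ∈ Vs then ((Vs.card : ℝ))⁻¹ else 0)
    (hNash : ∀ x ∈ stdSimplex ℝ (Fin n),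
        xstar ⬝ᵥ A.mulVec xstar ≤ x ⬝ᵥ A.mulVec xstar) :
    ∀ x ∈ stdSimplex ℝ (Fin n), x ≠ xstar →
      (∀ i ∈ Vs, 0 < x i) → (∀ i, i ∉ Vs → x i = 0) →
      ∃ ε₀ > (0 : ℝ), ∀ ε : ℝ, 0 < ε → ε ≤ ε₀ →
        xstar ⬝ᵥ A.mulVec xstar <
          (xstar + ε • (x - xstar)) ⬝ᵥ A.mulVec (xstar + ε • (x - xstar)) := by
  intro x hx hxne hpos hsupp
  set d : Fin n → ℝ := x - xstar with hd
  have hkz : (Vs.card : ℝ) ≠ 0 := by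
    exact Nat.cast_ne_zero.mpr (Finset.card_pos.mpr hne).ne'
  have hxs0 : ∀ i, i ∉ Vs → xstar i = 0 := by
    intro i hi; simp [hxstar, hi]
  have hd0 : ∀ i, i ∉ Vs → d i = 0 := by
    intro i hi
    simp [hd, Pi.sub_apply, hsupp i hi, hxs0 i hi]
  have hsumxs : ∑ i, xstar i = 1 := by
    rw [hxstar]
    rw [Finset.sum_ite_mem, Finset.univ_inter, Finset.sum_const, nsmul_eq_mul,
      mul_inv_cancel₀ hkz]
  have hsumd : ∑ i ∈ Vs, d i = 0 := by
    have h1 : ∑ i ∈ Vs, d i = ∑ i, d i := by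
      apply Finset.sum_subset (Finset.subset_univ Vs)
      intro i _ hi; exact hd0 i hi
    rw [h1]
    have : ∑ i, d i = (∑ i, x i) - ∑ i, xstar i := by
      simp [hd, Finset.sum_sub_distrib]
    rw [this, hx.2, hsumxs, sub_self]
  have hAxs : ∀ j ∈ Vs, A.mulVec xstar j = (Vs.card : ℝ)⁻¹ := by
    intro j hj
    have : A.mulVec xstar j = ∑ i, A j i * xstar i := rfl
    rw [this, hxstar]
    simp only [mul_ite, mul_zero]
    rw [Finset.sum_ite_mem, Finset.univ_inter]
    rw [Finset.sum_eq_single_of_mem j hj]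
    · rw [hdiag, one_mul]
    · intro i hi hij
      rw [hindep j hj i hi (Ne.symm hij), zero_mul]
  have hAd : ∀ j ∈ Vs, A.mulVec d j = d j := by
    intro j hj
    have h1 : A.mulVec d j = ∑ i, A j i * d i := rfl
    have h2 : ∑ i ∈ Vs, A j i * d i = ∑ i, A j i * d i := by
      apply Finset.sum_subset (Finset.subset_univ Vs)
      intro i _ hi; rw [hd0 i hi, mul_zero]
    rw [h1, ← h2, Finset.sum_eq_single_of_mem j hj]
    · rw [hdiag, one_mul]
    · intro i hi hij
      rw [hindep j hj i hi (Ne.symm hij), zero_mul]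
  have key1 : d ⬝ᵥ A.mulVec xstar = 0 := by
    have h1 : d ⬝ᵥ A.mulVec xstar = ∑ j, d j * A.mulVec xstar j := rfl
    have h2 : ∑ j ∈ Vs, d j * A.mulVec xstar j = ∑ j, d j * A.mulVec xstar j := by
      apply Finset.sum_subset (Finset.subset_univ Vs)
      intro i _ hi; rw [hd0 i hi, zero_mul]
    rw [h1, ← h2]
    calc ∑ j ∈ Vs, d j * A.mulVec xstar j
        = ∑ j ∈ Vs, d j * (Vs.card : ℝ)⁻¹ := by
          refine Finset.sum_congr rfl fun j hj => ?_
          rw [hAxs j hj]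
      _ = (∑ j ∈ Vs, d j) * (Vs.card : ℝ)⁻¹ := by rw [Finset.sum_mul]
      _ = 0 := by rw [hsumd, zero_mul]
  have key3 : xstar ⬝ᵥ A.mulVec d = 0 := by
    rw [dotProduct_mulVec, ← Matrix.mulVec_transpose, hsym.eq, dotProduct_comm]
    exact key1
  have key2 : d ⬝ᵥ A.mulVec d = ∑ j ∈ Vs, (d j) ^ 2 := by
    have h1 : d ⬝ᵥ A.mulVec d = ∑ j, d j * A.mulVec d j := rfl
    have h2 : ∑ j ∈ Vs, d j * A.mulVec d j = ∑ j, d j * A.mulVec d j := by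
      apply Finset.sum_subset (Finset.subset_univ Vs)
      intro i _ hi; rw [hd0 i hi, zero_mul]
    rw [h1, ← h2]
    refine Finset.sum_congr rfl fun j hj => ?_
    rw [hAd j hj, sq]
  have hdne : ∃ j, d j ≠ 0 := by
    by_contra h
    push_neg at h
    apply hxne
    funext i
    have := h i
    simpa [hd, Pi.sub_apply, sub_eq_zero] using this
  obtain ⟨j, hj⟩ := hdne
  have hjVs : j ∈ Vs := by
    by_contra h; exact hj (hd0 j h)
  have hS : 0 < ∑ j ∈ Vs, (d j) ^ 2 := by
    refine Finset.sum_pos' (fun i _ => sq_nonneg _) ⟨j, hjVs, ?_⟩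
    positivity
  refine ⟨1, one_pos, fun ε hε _ => ?_⟩
  have expand : (xstar + ε • d) ⬝ᵥ A.mulVec (xstar + ε • d) =
      xstar ⬝ᵥ A.mulVec xstar + ε ^ 2 * ∑ j ∈ Vs, (d j) ^ 2 := by
    simp only [Matrix.mulVec_add, Matrix.mulVec_smul, add_dotProduct,
      dotProduct_add, smul_dotProduct, dotProduct_smul, key1, key2, key3,
      smul_eq_mul, mul_zero, add_zero, zero_add]
    ring
  rw [expand]
  have : 0 < ε ^ 2 * ∑ j ∈ Vs, (d j) ^ 2 := mul_pos (pow_pos hε 2) hS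
  linarith
end

section
/- Let x* be an equilibrium strategy supported on a maximal r-regular induced subgraph G* = (V*,E*) of G with r > 0. Then x* is flexible: there exists a direction d = x − x* with x ∈ S*, x ≠ x*, such that for all sufficiently small ε > 0, (x*+εd)ᵀA(x*+εd) = x*ᵀAx*. -/
open Matrix Finset

/-- Theorem 3.2: an equilibrium strategy supported on a maximal r-regular
subnetwork with r > 0 is flexible: some small perturbation leaves the social
contact unchanged. -/
theorem stmt_6 (n : ℕ) (A : Matrix (Fin n) (Fin n) ℝ)
    (hsym : A.IsSymm)
    (h01 : ∀ i j, A i j = 0 ∨ A i j = 1)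
    (hdiag : ∀ i, A i i = 1)
    (r : ℕ) (hr : 0 < r) (Vs : Finset (Fin n)) (hne : Vs.Nonempty)
    (hreg : ∀ i ∈ Vs, (Vs.filter (fun j => j ≠ i ∧ A i j = 1)).card = r)
    (hout : ∀ i, i ∉ Vs → r + 1 ≤ (Vs.filter (fun j => A i j = 1)).card)
    (xstar : Fin n → ℝ)
    (hxstar : xstar = fun i => if i ∈ Vs then ((Vs.card : ℝ))⁻¹ else 0)
    (hNash : ∀ x ∈ stdSimplex ℝ (Fin n),
        xstar ⬝ᵥ A.mulVec xstar ≤ x ⬝ᵥ A.mulVec xstar) :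
    ∃ x ∈ stdSimplex ℝ (Fin n), x ≠ xstar ∧
      (∀ i ∈ Vs, 0 < x i) ∧ (∀ i, i ∉ Vs → x i = 0) ∧
      ∃ ε₀ > (0 : ℝ), ∀ ε : ℝ, 0 < ε → ε ≤ ε₀ →
        (xstar + ε • (x - xstar)) ⬝ᵥ A.mulVec (xstar + ε • (x - xstar)) =
          xstar ⬝ᵥ A.mulVec xstar := by
  classical
  obtain ⟨i, hi⟩ := hne
  have hfil : (Vs.filter (fun j => j ≠ i ∧ A i j = 1)).Nonempty := by
    rw [← Finset.card_pos, hreg i hi]; exact hr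
  obtain ⟨j, hjmem⟩ := hfil
  simp only [mem_filter] at hjmem
  obtain ⟨hjV, hji, hAij⟩ := hjmem
  have hAji : A j i = 1 := by
    have h := hsym
    rw [Matrix.IsSymm] at h
    calc A j i = Aᵀ i j := rfl
      _ = A i j := by rw [h]
      _ = 1 := hAij
  have hkpos : 0 < Vs.card := Finset.card_pos.mpr ⟨i, hi⟩
  have hk0 : (0:ℝ) < (Vs.card : ℝ) := by exact_mod_cast hkpos
  set c : ℝ := ((Vs.card : ℝ))⁻¹ with hc
  have hcpos : 0 < c := by positivity
  set δ : ℝ := c / 2 with hδdef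
  have hδpos : 0 < δ := by positivity
  have hδlt : δ < c := by
    rw [hδdef]; linarith
  -- the perturbation direction
  set g : Fin n → ℝ := fun t => if t = i then δ else if t = j then -δ else 0 with hgdef
  have hij : i ≠ j := Ne.symm hji
  have hdv : ∀ v : Fin n → ℝ, g ⬝ᵥ v = δ * v i - δ * v j := by
    intro v
    have hsplit : ∀ t, g t * v t =
        (if t = i then δ * v i else 0) + (if t = j then -(δ * v j) else 0) := by
      intro t
      rcases eq_or_ne t i with rfl | h1
      · simp [hgdef, hij]
      · rcases eq_or_ne t j with rfl | h2
        · simp [hgdef, h1]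
        · simp [hgdef, h1, h2]
    simp only [dotProduct, hsplit, Finset.sum_add_distrib,
      Finset.sum_ite_eq', Finset.mem_univ, if_true]
    ring
  -- row sums inside Vs
  have hrow : ∀ l ∈ Vs, ∑ t ∈ Vs, A l t = (r : ℝ) + 1 := by
    intro l hl
    have h1 : ∀ t ∈ Vs, A l t = if A l t = 1 then (1:ℝ) else 0 := by
      intro t _
      rcases h01 l t with h | h <;> simp [h]
    rw [Finset.sum_congr rfl h1, Finset.sum_boole]
    have hins : Vs.filter (fun t => A l t = 1)
        = insert l (Vs.filter fun t => t ≠ l ∧ A l t = 1) := by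
      ext t
      simp only [mem_filter, mem_insert]
      constructor
      · rintro ⟨ht, hA⟩
        by_cases h : t = l
        · exact Or.inl h
        · exact Or.inr ⟨ht, h, hA⟩
      · rintro (h | ⟨ht, _, hA⟩)
        · refine ⟨h ▸ hl, ?_⟩
          rw [h]
          exact hdiag l
        · exact ⟨ht, hA⟩
    rw [hins, Finset.card_insert_of_notMem (fun h => (Finset.mem_filter.mp h).2.1 rfl),
      hreg l hl]
    push_cast; ring
  -- A x* is constant on Vs
  have hconst : ∀ l ∈ Vs, A.mulVec xstar l = ((r:ℝ) + 1) * c := by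
    intro l hl
    have : ∀ t, A l t * xstar t = if t ∈ Vs then A l t * c else 0 := by
      intro t
      rw [hxstar]
      by_cases ht : t ∈ Vs <;> simp [ht]
    simp only [Matrix.mulVec, dotProduct, this, Finset.sum_ite_mem,
      Finset.univ_inter]
    rw [← Finset.sum_mul, hrow l hl]
  -- the perturbed strategy
  refine ⟨fun t => xstar t + g t, ?_, ?_, ?_, ?_, ?_⟩
  · constructor
    · intro t
      rw [hxstar]
      rcases eq_or_ne t i with rfl | h1
      · simp [hgdef, hi]
        positivity
      · rcases eq_or_ne t j with rfl | h2
        · simp [hgdef, h1, hjV]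
          linarith
        · by_cases ht : t ∈ Vs <;> simp [hgdef, h1, h2, ht] <;> positivity
    · have hsum1 : ∑ t, xstar t = 1 := by
        rw [hxstar]
        simp only [Finset.sum_ite_mem, Finset.univ_inter, Finset.sum_const,
          nsmul_eq_mul]
        exact mul_inv_cancel₀ (ne_of_gt hk0)
      have hsum2 : ∑ t, g t = 0 := by
        have := hdv (fun _ => 1)
        simpa [dotProduct] using this
      rw [Finset.sum_add_distrib, hsum1, hsum2]; ring
  · intro heq
    have := congrFun heq i
    simp only [hgdef, if_true] at this
    have : δ = 0 := by linarith [this]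
    exact ne_of_gt hδpos this
  · intro t ht
    rw [hxstar]
    rcases eq_or_ne t i with rfl | h1
    · simp [hgdef, ht]
      positivity
    · rcases eq_or_ne t j with rfl | h2
      · simp [hgdef, h1, ht]
        linarith
      · simp [hgdef, h1, h2, ht]
        positivity
  · intro t ht
    have h1 : t ≠ i := fun h => ht (h ▸ hi)
    have h2 : t ≠ j := fun h => ht (h ▸ hjV)
    rw [hxstar]
    simp [hgdef, h1, h2, ht]
  · refine ⟨1, one_pos, ?_⟩
    intro ε hε0 hε1
    have hxg : (fun t => xstar t + g t) - xstar = g := by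
      funext t; simp
    rw [hxg]
    have e1 : g ⬝ᵥ A.mulVec xstar = 0 := by
      rw [hdv, hconst i hi, hconst j hjV]; ring
    have e2 : xstar ⬝ᵥ A.mulVec g = 0 := by
      rw [Matrix.dotProduct_mulVec]
      have hv : A.vecMul xstar = A.mulVec xstar := by
        rw [← Matrix.mulVec_transpose, hsym.eq]
      rw [hv, dotProduct_comm, hdv, hconst i hi, hconst j hjV]; ring
    have e3 : g ⬝ᵥ A.mulVec g = 0 := by
      have hv : ∀ l, A.mulVec g l = δ * A l i - δ * A l j := by
        intro l
        show A l ⬝ᵥ g = _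
        rw [dotProduct_comm, hdv]
      rw [hdv, hv i, hv j, hdiag i, hdiag j, hAij, hAji]; ring
    rw [Matrix.mulVec_add, Matrix.mulVec_smul, add_dotProduct,
      dotProduct_add, dotProduct_add, smul_dotProduct,
      dotProduct_smul, dotProduct_smul, smul_dotProduct,
      e1, e2, e3]
    simp
end

section
/- Let x* be an equilibrium strategy supported on a maximal r-regular subgraph G* whose connected components G*_1,…,G*_m are all complete graphs on r+1 vertices (minimal r-regular), r > 0. Then x* is weakly rigid: for every d = x − x* with x ∈ S*, x ≠ x*, and all small ε > 0, (x*+εd)ᵀA(x*+εd) ≥ x*ᵀAx*; moreover dᵀAd = Σ_{i=1}^m (Σ_{j∈V*_i} d_j)². -/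
open Matrix Finset

/-!
Write `d = x - x*`. Since `d` lives on `V*`, the components are complete and there are no edges
between components, `(A d)_i` is the sum of `d` over the component of `i`, which gives the formula
for `dᵀ A d`. As `A x*` is constant on `V*` and `d` sums to zero there, `dᵀ A x* = 0`, so by
symmetry of `A` the cross terms vanish and `(x* + ε d)ᵀ A (x* + ε d) = x*ᵀ A x* + ε² dᵀ A d`,
with `dᵀ A d ≥ 0` a sum of squares.
-/

section Blocks

variable {ι κ : Type*} [Fintype ι] [Fintype κ] [DecidableEq ι] {comps : κ → Finset ι}

theorem sum_eq_sum_sum_of_support_subset_biUnion {M : Type*} [AddCommMonoid M]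
    (hdisj : Pairwise fun k l => Disjoint (comps k) (comps l))
    {f : ι → M} (hf : ∀ i ∉ univ.biUnion comps, f i = 0) :
    ∑ i, f i = ∑ k, ∑ i ∈ comps k, f i := by
  rw [← sum_subset (subset_univ _) fun i _ hi => hf i hi,
    sum_biUnion (hdisj.set_pairwise _)]

variable {R : Type*} [CommSemiring R] {A : Matrix ι ι R} {d : ι → R}
  (hdisj : Pairwise fun k l => Disjoint (comps k) (comps l))
  (hd : ∀ i ∉ univ.biUnion comps, d i = 0)
  (hcomplete : ∀ k, ∀ i ∈ comps k, ∀ j ∈ comps k, A i j = 1)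
  (hcross : ∀ k l, k ≠ l → ∀ i ∈ comps k, ∀ j ∈ comps l, A i j = 0)
include hdisj hd hcomplete hcross

theorem mulVec_apply_eq_sum_of_mem {k : κ} {i : ι} (hi : i ∈ comps k) :
    (A *ᵥ d) i = ∑ j ∈ comps k, d j := by
  rw [mulVec, dotProduct, sum_eq_sum_sum_of_support_subset_biUnion hdisj
    fun j hj => by rw [hd j hj, mul_zero], Fintype.sum_eq_single k]
  · exact sum_congr rfl fun j hj => by rw [hcomplete k i hi j hj, one_mul]
  · intro l hl
    exact sum_eq_zero fun j hj => by rw [hcross k l hl.symm i hi j hj, zero_mul]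

theorem dotProduct_mulVec_self_eq_sum_sq :
    d ⬝ᵥ A *ᵥ d = ∑ k, (∑ j ∈ comps k, d j) ^ 2 := by
  rw [dotProduct, sum_eq_sum_sum_of_support_subset_biUnion hdisj
    fun i hi => by rw [hd i hi, zero_mul]]
  refine sum_congr rfl fun k _ => ?_
  rw [sum_congr rfl fun i hi => by
    rw [mulVec_apply_eq_sum_of_mem hdisj hd hcomplete hcross hi], ← sum_mul, sq]

end Blocks

theorem dotProduct_eq_zero_of_const_on_support {ι R : Type*} [Fintype ι] [CommSemiring R]
    {s : Finset ι} {d v : ι → R} {c : R} (hd : ∀ i ∉ s, d i = 0) (hv : ∀ i ∈ s, v i = c)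
    (hsum : ∑ i ∈ s, d i = 0) : d ⬝ᵥ v = 0 := by
  rw [dotProduct, ← sum_subset (subset_univ s) fun i _ hi => by rw [hd i hi, zero_mul],
    sum_congr rfl fun i hi => by rw [hv i hi], ← sum_mul, hsum, zero_mul]

theorem Matrix.IsSymm.dotProduct_mulVec_add_smul {ι R : Type*} [Fintype ι] [CommRing R]
    {A : Matrix ι ι R} (hA : A.IsSymm) {x d : ι → R} (h : d ⬝ᵥ A *ᵥ x = 0) (ε : R) :
    (x + ε • d) ⬝ᵥ A *ᵥ (x + ε • d) = x ⬝ᵥ A *ᵥ x + ε ^ 2 * (d ⬝ᵥ A *ᵥ d) := by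
  have h' : x ⬝ᵥ A *ᵥ d = 0 := by
    rw [dotProduct_mulVec, ← mulVec_transpose, hA.eq, dotProduct_comm, h]
  simp only [mulVec_add, mulVec_smul, add_dotProduct, dotProduct_add, smul_dotProduct,
    dotProduct_smul, h, h', smul_eq_mul]
  ring

theorem sum_ite_mem_inv_card {ι : Type*} [DecidableEq ι] {s : Finset ι} (hs : s.Nonempty) :
    ∑ i ∈ s, (if i ∈ s then ((#s : ℝ))⁻¹ else 0) = 1 := by
  rw [sum_ite_mem, inter_self, sum_const, nsmul_eq_mul,
    mul_inv_cancel₀ (Nat.cast_ne_zero.mpr hs.card_pos.ne')]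

theorem stmt_8_general (n : ℕ) (A : Matrix (Fin n) (Fin n) ℝ)
    (hsym : A.IsSymm)
    (m : ℕ) (comps : Fin m → Finset (Fin n))
    (hdisj : ∀ k l, k ≠ l → Disjoint (comps k) (comps l))
    (Vs : Finset (Fin n)) (hVs : Vs = Finset.univ.biUnion comps)
    (hne : Vs.Nonempty)
    (hcomplete : ∀ k, ∀ i ∈ comps k, ∀ j ∈ comps k, A i j = 1)
    (hcross : ∀ k l, k ≠ l → ∀ i ∈ comps k, ∀ j ∈ comps l, A i j = 0)
    (xstar : Fin n → ℝ)
    (hxstar : xstar = fun i => if i ∈ Vs then ((Vs.card : ℝ))⁻¹ else 0)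
    (lam : ℝ) (hlam : ∀ i ∈ Vs, A.mulVec xstar i = lam) :
    ∀ x ∈ stdSimplex ℝ (Fin n), x ≠ xstar →
      (∀ i ∈ Vs, 0 < x i) → (∀ i, i ∉ Vs → x i = 0) →
      ((x - xstar) ⬝ᵥ A.mulVec (x - xstar) =
          ∑ k, (∑ j ∈ comps k, (x j - xstar j)) ^ 2) ∧
      ∃ ε₀ > (0 : ℝ), ∀ ε : ℝ, 0 < ε → ε ≤ ε₀ →
        xstar ⬝ᵥ A.mulVec xstar ≤
          (xstar + ε • (x - xstar)) ⬝ᵥ A.mulVec (xstar + ε • (x - xstar)) := by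
  intro x hx _ _ hzero
  have hd : ∀ i ∉ Vs, (x - xstar) i = 0 := fun i hi => by simp [hzero i hi, hxstar, hi]
  have hdsum : ∑ i ∈ Vs, (x - xstar) i = 0 := by
    have hxsum : ∑ i ∈ Vs, x i = 1 := by
      rw [sum_subset (subset_univ Vs) fun i _ hi => hzero i hi, hx.2]
    simp only [Pi.sub_apply]
    rw [sum_sub_distrib, hxsum, hxstar, sum_ite_mem_inv_card hne, sub_self]
  have hquad := dotProduct_mulVec_self_eq_sum_sq hdisj (hVs ▸ hd) hcomplete hcross
  refine ⟨hquad, 1, one_pos, fun ε _ _ => ?_⟩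
  rw [hsym.dotProduct_mulVec_add_smul (dotProduct_eq_zero_of_const_on_support hd hlam hdsum)]
  exact le_add_of_nonneg_right <| mul_nonneg (sq_nonneg ε) <|
    hquad ▸ sum_nonneg fun k _ => sq_nonneg _

/-- Theorem 3.3: an equilibrium strategy supported on a maximal r-regular
subnetwork whose components are all minimal (complete K_{r+1}) is weakly rigid;
moreover dᵀAd = Σ_k (Σ_{j ∈ V*_k} d_j)². -/
theorem stmt_8 (n : ℕ) (A : Matrix (Fin n) (Fin n) ℝ)
    (hsym : A.IsSymm)
    (h01 : ∀ i j, A i j = 0 ∨ A i j = 1)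
    (hdiag : ∀ i, A i i = 1)
    (r : ℕ) (hr : 0 < r)
    (m : ℕ) (comps : Fin m → Finset (Fin n))
    (hdisj : ∀ k l, k ≠ l → Disjoint (comps k) (comps l))
    (Vs : Finset (Fin n)) (hVs : Vs = Finset.univ.biUnion comps)
    (hne : Vs.Nonempty)
    (hcard : ∀ k, (comps k).card = r + 1)
    (hcomplete : ∀ k, ∀ i ∈ comps k, ∀ j ∈ comps k, A i j = 1)
    (hcross : ∀ k l, k ≠ l → ∀ i ∈ comps k, ∀ j ∈ comps l, A i j = 0)
    (xstar : Fin n → ℝ)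
    (hxstar : xstar = fun i => if i ∈ Vs then ((Vs.card : ℝ))⁻¹ else 0)
    (lam : ℝ) (hlam : ∀ i ∈ Vs, A.mulVec xstar i = lam)
    (hNash : ∀ x ∈ stdSimplex ℝ (Fin n),
        xstar ⬝ᵥ A.mulVec xstar ≤ x ⬝ᵥ A.mulVec xstar) :
    ∀ x ∈ stdSimplex ℝ (Fin n), x ≠ xstar →
      (∀ i ∈ Vs, 0 < x i) → (∀ i, i ∉ Vs → x i = 0) →
      ((x - xstar) ⬝ᵥ A.mulVec (x - xstar) =
          ∑ k, (∑ j ∈ comps k, (x j - xstar j)) ^ 2) ∧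
      ∃ ε₀ > (0 : ℝ), ∀ ε : ℝ, 0 < ε → ε ≤ ε₀ →
        xstar ⬝ᵥ A.mulVec xstar ≤
          (xstar + ε • (x - xstar)) ⬝ᵥ A.mulVec (xstar + ε • (x - xstar)) :=
  stmt_8_general n A hsym m comps hdisj Vs hVs hne hcomplete hcross xstar hxstar lam hlam
end

section
/- Let x* be an equilibrium strategy supported on a connected maximal r-regular induced subgraph G* (r > 0) that is not a complete graph on r+1 vertices. Then x* is fragile: there exists a direction d = x − x* with x ∈ S*, x ≠ x*, such that for all sufficiently small ε > 0, (x*+εd)ᵀA(x*+εd) < x*ᵀAx*. -/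
/-! A connected, non-complete graph contains an induced path `i - l - j`. Take the direction
`d = e i + e j - 2 e l`. Regularity makes `A x*` constant on `V*`, so `dᵀ A x* = 0`, while
`dᵀ A d = 2 + 4 - 8 + 2 A i j = -2` because `i` and `j` are not adjacent. Hence
`(x* + t d)ᵀ A (x* + t d) = x*ᵀ A x* - 2 t²` for every `t`, and `x* + δ d` lies in `S*` for small `δ > 0`. -/

open Matrix Finset

theorem Relation.ReflTransGen.exists_boundary {α : Type*} {R : α → α → Prop} {P : α → Prop}
    {a b : α} (h : Relation.ReflTransGen R a b) (ha : P a) (hb : ¬ P b) :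
    ∃ u v, R u v ∧ P u ∧ ¬ P v := by
  induction h with
  | refl => exact absurd ha hb
  | @tail c d _ hcd ih =>
    by_cases hc : P c
    · exact ⟨c, d, hcd, hc, hb⟩
    · exact ih hc

namespace Matrix

variable {ι R : Type*} [Fintype ι]

theorem IsSymm.dotProduct_mulVec_comm [CommSemiring R] {A : Matrix ι ι R} (hA : A.IsSymm)
    (u v : ι → R) : u ⬝ᵥ A *ᵥ v = v ⬝ᵥ A *ᵥ u := by
  rw [dotProduct_mulVec, ← mulVec_transpose, hA.eq, dotProduct_comm]

theorem IsSymm.dotProduct_mulVec_add_smul_s9 [CommRing R] {A : Matrix ι ι R} (hA : A.IsSymm)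
    (x d : ι → R) (t : R) :
    (x + t • d) ⬝ᵥ A *ᵥ (x + t • d) =
      x ⬝ᵥ A *ᵥ x + 2 * t * (d ⬝ᵥ A *ᵥ x) + t ^ 2 * (d ⬝ᵥ A *ᵥ d) := by
  simp only [mulVec_add, mulVec_smul, dotProduct_add, add_dotProduct, smul_dotProduct,
    dotProduct_smul, smul_eq_mul, hA.dotProduct_mulVec_comm x d]
  ring

theorem IsSymm.dotProduct_mulVec_add_smul_lt {A : Matrix ι ι ℝ} (hA : A.IsSymm)
    {x d : ι → ℝ} (hcrit : d ⬝ᵥ A *ᵥ x = 0) (hneg : d ⬝ᵥ A *ᵥ d < 0) {t : ℝ} (ht : t ≠ 0) :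
    (x + t • d) ⬝ᵥ A *ᵥ (x + t • d) < x ⬝ᵥ A *ᵥ x := by
  rw [hA.dotProduct_mulVec_add_smul_s9, hcrit]
  have : t ^ 2 * (d ⬝ᵥ A *ᵥ d) < 0 := mul_neg_of_pos_of_neg (by positivity) hneg
  linarith

end Matrix

section

variable {ι : Type*}

theorem exists_cherry_of_reflTransGen {A : Matrix ι ι ℝ}
    (h01 : ∀ i j, A i j = 0 ∨ A i j = 1) (hdiag : ∀ i, A i i = 1) {s : Finset ι} {i j : ι}
    (hpath : Relation.ReflTransGen (fun a b => a ∈ s ∧ b ∈ s ∧ a ≠ b ∧ A a b = 1) i j)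
    (hij : A i j = 0) : ∃ l ∈ s, ∃ m ∈ s, A i l = 1 ∧ A l m = 1 ∧ A i m = 0 := by
  obtain ⟨l, m, ⟨hl, hm, -, hlm⟩, hil, him⟩ :=
    hpath.exists_boundary (P := fun b => A i b = 1) (hdiag i) (by simp [hij])
  exact ⟨l, hl, m, hm, hil, hlm, (h01 i m).resolve_right him⟩

variable [DecidableEq ι]

theorem Matrix.sum_row_eq_card_adj_add_one {A : Matrix ι ι ℝ}
    (h01 : ∀ i j, A i j = 0 ∨ A i j = 1) (hdiag : ∀ i, A i i = 1) {s : Finset ι} {k : ι}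
    (hk : k ∈ s) : ∑ m ∈ s, A k m = #{m ∈ s | m ≠ k ∧ A k m = 1} + 1 := by
  have hbool : ∀ m, A k m = if A k m = 1 then 1 else 0 := fun m => by
    rcases h01 k m with h | h <;> simp [h]
  have herase : {m ∈ s | m ≠ k ∧ A k m = 1} = {m ∈ s | A k m = 1}.erase k := by
    ext m; simp [and_left_comm]
  rw [sum_congr rfl fun m _ => hbool m, sum_boole, herase,
    ← card_erase_add_one (mem_filter.2 ⟨hk, hdiag k⟩)]
  push_cast
  rfl

noncomputable def uniformOn (s : Finset ι) : ι → ℝ := fun k => if k ∈ s then (#s : ℝ)⁻¹ else 0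

variable {s : Finset ι}

theorem mulVec_uniformOn_apply [Fintype ι] (A : Matrix ι ι ℝ) (k : ι) :
    (A *ᵥ uniformOn s) k = (∑ m ∈ s, A k m) * (#s : ℝ)⁻¹ := by
  simp only [uniformOn, mulVec, dotProduct, mul_ite, mul_zero, sum_ite_mem, univ_inter, sum_mul]

theorem sum_uniformOn [Fintype ι] (hs : s.Nonempty) : ∑ k, uniformOn s k = 1 := by
  simp only [uniformOn, sum_ite_mem, univ_inter, sum_const, nsmul_eq_mul]
  exact mul_inv_cancel₀ (by exact_mod_cast hs.card_pos.ne')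

variable {d : ι → ℝ} {δ : ℝ}

theorem uniformOn_add_smul_pos (hd : ∀ k, -2 ≤ d k) (hδ : 0 ≤ δ) (hδs : 2 * δ < (#s : ℝ)⁻¹)
    {k : ι} (hk : k ∈ s) : 0 < (uniformOn s + δ • d) k := by
  have := mul_le_mul_of_nonneg_left (hd k) hδ
  simp only [uniformOn, Pi.add_apply, Pi.smul_apply, smul_eq_mul, if_pos hk]
  linarith

theorem uniformOn_add_smul_of_notMem (hd : ∀ k ∉ s, d k = 0) {k : ι} (hk : k ∉ s) :
    (uniformOn s + δ • d) k = 0 := by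
  simp [uniformOn, hk, hd k hk]

theorem uniformOn_add_smul_mem_stdSimplex [Fintype ι] (hs : s.Nonempty) (hsum : ∑ k, d k = 0)
    (hd : ∀ k, -2 ≤ d k) (hsupp : ∀ k ∉ s, d k = 0) (hδ : 0 ≤ δ) (hδs : 2 * δ < (#s : ℝ)⁻¹) :
    uniformOn s + δ • d ∈ stdSimplex ℝ ι := by
  refine ⟨fun k => ?_, ?_⟩
  · by_cases hk : k ∈ s
    exacts [(uniformOn_add_smul_pos hd hδ hδs hk).le, (uniformOn_add_smul_of_notMem hsupp hk).ge]
  · simp only [Pi.add_apply, Pi.smul_apply, smul_eq_mul, sum_add_distrib, ← mul_sum, hsum,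
      sum_uniformOn hs, mul_zero, add_zero]

-- The vertex `l` is the middle of a path `i - l - j`.
def cherryVec (i l j : ι) : ι → ℝ := Pi.single i 1 + Pi.single j 1 - Pi.single l 2

variable (i l j : ι)

theorem neg_two_le_cherryVec (k : ι) : -2 ≤ cherryVec i l j k := by
  simp only [cherryVec, Pi.add_apply, Pi.sub_apply, Pi.single_apply]
  split_ifs <;> norm_num

theorem cherryVec_apply_of_notMem (hi : i ∈ s) (hl : l ∈ s) (hj : j ∈ s) {k : ι}
    (hk : k ∉ s) : cherryVec i l j k = 0 := by
  have hne : ∀ a ∈ s, k ≠ a := fun a ha h => hk (h ▸ ha)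
  simp [cherryVec, hne i hi, hne l hl, hne j hj]

variable [Fintype ι]

theorem cherryVec_dotProduct (v : ι → ℝ) : cherryVec i l j ⬝ᵥ v = v i + v j - 2 * v l := by
  simp [cherryVec, add_dotProduct, sub_dotProduct, single_dotProduct]

theorem sum_cherryVec : ∑ k, cherryVec i l j k = 0 := by
  rw [← dotProduct_one, cherryVec_dotProduct]
  norm_num

theorem Matrix.IsSymm.cherryVec_dotProduct_mulVec_self {A : Matrix ι ι ℝ} (hA : A.IsSymm) :
    cherryVec i l j ⬝ᵥ A *ᵥ cherryVec i l j =
      A i i + A j j + 4 * A l l + 2 * A i j - 4 * A i l - 4 * A l j := by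
  rw [cherryVec_dotProduct]
  simp only [cherryVec, mulVec_add, mulVec_sub, mulVec_single, Pi.add_apply, Pi.sub_apply,
    Pi.smul_apply, col_apply, op_smul_eq_mul]
  rw [hA.apply j i, hA.apply l i, hA.apply j l]
  ring

end

theorem stmt_9_general (n : ℕ) (A : Matrix (Fin n) (Fin n) ℝ)
    (hsym : A.IsSymm)
    (h01 : ∀ i j, A i j = 0 ∨ A i j = 1)
    (hdiag : ∀ i, A i i = 1)
    (r : ℕ) (Vs : Finset (Fin n))
    (hreg : ∀ i ∈ Vs, (Vs.filter (fun j => j ≠ i ∧ A i j = 1)).card = r)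
    (hconn : ∀ i ∈ Vs, ∀ j ∈ Vs,
        Relation.ReflTransGen
          (fun a b => a ∈ Vs ∧ b ∈ Vs ∧ a ≠ b ∧ A a b = 1) i j)
    (hnotcomplete : ∃ i ∈ Vs, ∃ j ∈ Vs, i ≠ j ∧ A i j = 0)
    (xstar : Fin n → ℝ)
    (hxstar : xstar = fun i => if i ∈ Vs then ((Vs.card : ℝ))⁻¹ else 0) :
    ∃ x ∈ stdSimplex ℝ (Fin n), x ≠ xstar ∧
      (∀ i ∈ Vs, 0 < x i) ∧ (∀ i, i ∉ Vs → x i = 0) ∧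
      ∃ ε₀ > (0 : ℝ), ∀ ε : ℝ, 0 < ε → ε ≤ ε₀ →
        (xstar + ε • (x - xstar)) ⬝ᵥ A.mulVec (xstar + ε • (x - xstar)) <
          xstar ⬝ᵥ A.mulVec xstar := by
  obtain ⟨i, hi, j, hj, -, hij⟩ := hnotcomplete
  obtain ⟨l, hl, m, hm, hil, hlm, him⟩ :=
    exists_cherry_of_reflTransGen h01 hdiag (hconn i hi j hj) hij
  obtain rfl : xstar = uniformOn Vs := hxstar
  have hAx : ∀ k ∈ Vs, (A *ᵥ uniformOn Vs) k = (r + 1) * (#Vs : ℝ)⁻¹ := fun k hk => by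
    rw [mulVec_uniformOn_apply, sum_row_eq_card_adj_add_one h01 hdiag hk, hreg k hk]
  set d := cherryVec i l m
  have hcrit : d ⬝ᵥ A *ᵥ uniformOn Vs = 0 := by
    rw [cherryVec_dotProduct, hAx i hi, hAx l hl, hAx m hm]; ring
  have hneg : d ⬝ᵥ A *ᵥ d < 0 := by
    rw [hsym.cherryVec_dotProduct_mulVec_self, hdiag, hdiag, hdiag, him, hil, hlm]; norm_num
  have hsupp : ∀ k ∉ Vs, d k = 0 := fun k => cherryVec_apply_of_notMem i l m hi hl hm
  have hN : 0 < (#Vs : ℝ)⁻¹ := inv_pos.2 (by exact_mod_cast card_pos.2 ⟨i, hi⟩)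
  obtain ⟨δ, hδ, hδs⟩ : ∃ δ : ℝ, 0 < δ ∧ 2 * δ < (#Vs : ℝ)⁻¹ :=
    ⟨(#Vs : ℝ)⁻¹ / 4, by positivity, by linarith⟩
  refine ⟨uniformOn Vs + δ • d, uniformOn_add_smul_mem_stdSimplex ⟨i, hi⟩ (sum_cherryVec i l m)
      (neg_two_le_cherryVec i l m) hsupp hδ.le hδs, ?_,
    fun k => uniformOn_add_smul_pos (neg_two_le_cherryVec i l m) hδ.le hδs,
    fun k => uniformOn_add_smul_of_notMem hsupp, 1, one_pos, fun ε hε _ => ?_⟩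
  · exact add_ne_left.2 (smul_ne_zero hδ.ne' (by rintro hd; simp [hd] at hneg))
  · rw [add_sub_cancel_left, smul_smul]
    exact hsym.dotProduct_mulVec_add_smul_lt hcrit hneg (by positivity)

/-- Theorem 3.4 (connected case): an equilibrium strategy supported on a
connected maximal r-regular subnetwork (r > 0) that is not a minimal
(complete) r-regular network is fragile: some small perturbation strictly
decreases the social contact. -/
theorem stmt_9 (n : ℕ) (A : Matrix (Fin n) (Fin n) ℝ)
    (hsym : A.IsSymm)
    (h01 : ∀ i j, A i j = 0 ∨ A i j = 1)
    (hdiag : ∀ i, A i i = 1)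
    (r : ℕ) (hr : 0 < r) (Vs : Finset (Fin n)) (hne : Vs.Nonempty)
    (hreg : ∀ i ∈ Vs, (Vs.filter (fun j => j ≠ i ∧ A i j = 1)).card = r)
    (hout : ∀ i, i ∉ Vs → r + 1 ≤ (Vs.filter (fun j => A i j = 1)).card)
    (hconn : ∀ i ∈ Vs, ∀ j ∈ Vs,
        Relation.ReflTransGen
          (fun a b => a ∈ Vs ∧ b ∈ Vs ∧ a ≠ b ∧ A a b = 1) i j)
    (hnotcomplete : ∃ i ∈ Vs, ∃ j ∈ Vs, i ≠ j ∧ A i j = 0)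
    (xstar : Fin n → ℝ)
    (hxstar : xstar = fun i => if i ∈ Vs then ((Vs.card : ℝ))⁻¹ else 0)
    (hNash : ∀ x ∈ stdSimplex ℝ (Fin n),
        xstar ⬝ᵥ A.mulVec xstar ≤ x ⬝ᵥ A.mulVec xstar) :
    ∃ x ∈ stdSimplex ℝ (Fin n), x ≠ xstar ∧
      (∀ i ∈ Vs, 0 < x i) ∧ (∀ i, i ∉ Vs → x i = 0) ∧
      ∃ ε₀ > (0 : ℝ), ∀ ε : ℝ, 0 < ε → ε ≤ ε₀ →
        (xstar + ε • (x - xstar)) ⬝ᵥ A.mulVec (xstar + ε • (x - xstar)) <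
          xstar ⬝ᵥ A.mulVec xstar :=
  stmt_9_general n A hsym h01 hdiag r Vs hreg hconn hnotcomplete xstar hxstar
end

section
/- Let weights w_i ≥ 1 be assigned to vertices and Ã = WAW with W = diag(w). Let V* be a maximal independent set such that for every i ∉ V* there exists a neighbor j ∈ V* with w_i ≥ w_j. Then x* with x*_i = w̃²/w_i² for i ∈ V* (where 1/w̃² = Σ_{i∈V*} 1/w_i²) and x*_i = 0 otherwise is a Nash equilibrium of the weighted social distancing game, with equilibrium value λ* = w̃². -/
/-!
On a maximal independent set `V*` the weighted game restricted to `V*` is diagonal, so the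
strategy `x*_i ∝ 1/w_i²` equalises the payoffs `(Ãx*)_i = w̃²` for `i ∈ V*`. A vertex `i ∉ V*`
has a neighbour `j ∈ V*` with `w_j ≤ w_i`, and this single edge already gives it payoff
`w_i w̃² / w_j ≥ w̃²`. So `x*` is a best response to itself: every pure strategy in its support
attains the minimum payoff against `x*`.
-/

open Matrix Finset

section StdSimplex

variable {ι : Type*} [Fintype ι]

theorem dotProduct_eq_of_forall_ne_zero {x v : ι → ℝ} {c : ℝ} (hx : x ∈ stdSimplex ℝ ι)
    (h : ∀ i, x i ≠ 0 → v i = c) : x ⬝ᵥ v = c := by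
  calc x ⬝ᵥ v = ∑ i, x i * c := by
        refine sum_congr rfl fun i _ => ?_
        by_cases hi : x i = 0
        · simp [hi]
        · rw [h i hi]
    _ = c := by rw [← sum_mul, hx.2, one_mul]

theorem le_dotProduct_of_forall_le {y v : ι → ℝ} {c : ℝ} (hy : y ∈ stdSimplex ℝ ι)
    (h : ∀ i, c ≤ v i) : c ≤ y ⬝ᵥ v := by
  calc c = ∑ i, y i * c := by rw [← sum_mul, hy.2, one_mul]
    _ ≤ y ⬝ᵥ v := sum_le_sum fun i _ => mul_le_mul_of_nonneg_left (h i) (hy.1 i)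

theorem isNashEquilibrium_of_support (M : Matrix ι ι ℝ) {x : ι → ℝ} {c : ℝ}
    (hx : x ∈ stdSimplex ℝ ι) (hle : ∀ i, c ≤ (M *ᵥ x) i)
    (hsupp : ∀ i, x i ≠ 0 → (M *ᵥ x) i = c) :
    (∀ y ∈ stdSimplex ℝ ι, x ⬝ᵥ M *ᵥ x ≤ y ⬝ᵥ M *ᵥ x) ∧ x ⬝ᵥ M *ᵥ x = c := by
  have hval := dotProduct_eq_of_forall_ne_zero hx hsupp
  exact ⟨fun y hy => hval ▸ le_dotProduct_of_forall_le hy hle, hval⟩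

end StdSimplex

section WeightedGame

variable {ι : Type*} [Fintype ι] [DecidableEq ι]

theorem mulVec_diagonal_mul_mul_diagonal_apply (w : ι → ℝ) (A : Matrix ι ι ℝ) (x : ι → ℝ)
    (i : ι) : ((diagonal w * A * diagonal w) *ᵥ x) i = w i * ∑ j, A i j * (w j * x j) := by
  simp only [mulVec, dotProduct, mul_diagonal, diagonal_mul, mul_sum]
  exact sum_congr rfl fun j _ => by ring

theorem mem_stdSimplex_inv_sq_weights {w : ι → ℝ} {s : Finset ι} (hs : s.Nonempty)
    (hw : ∀ i ∈ s, w i ≠ 0) :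
    (fun i => if i ∈ s then (∑ j ∈ s, (w j ^ 2)⁻¹)⁻¹ / w i ^ 2 else 0) ∈ stdSimplex ℝ ι := by
  have hpos : 0 < ∑ j ∈ s, (w j ^ 2)⁻¹ :=
    sum_pos (fun j hj => by have := hw j hj; positivity) hs
  refine ⟨fun i => ?_, ?_⟩
  · dsimp only
    split <;> positivity
  · rw [sum_ite_mem, univ_inter]
    simp only [div_eq_mul_inv, ← mul_sum]
    exact inv_mul_cancel₀ hpos.ne'

theorem mulVec_inv_sq_weights_apply (w : ι → ℝ) (A : Matrix ι ι ℝ) {s : Finset ι}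
    (hw : ∀ j ∈ s, w j ≠ 0) (c : ℝ) (i : ι) :
    ((diagonal w * A * diagonal w) *ᵥ fun j => if j ∈ s then c / w j ^ 2 else 0) i =
      w i * ∑ j ∈ s, A i j * (c / w j) := by
  rw [mulVec_diagonal_mul_mul_diagonal_apply]
  simp only [mul_ite, mul_zero, sum_ite_mem, univ_inter]
  congr 1
  refine sum_congr rfl fun j hj => ?_
  have := hw j hj
  field_simp

end WeightedGame

section Payoff

variable {ι : Type*}

theorem inv_sq_weights_payoff_of_mem {w : ι → ℝ} {A : Matrix ι ι ℝ} {s : Finset ι} {i : ι}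
    (hi : i ∈ s) (hdiag : A i i = 1) (hindep : ∀ j ∈ s, i ≠ j → A i j = 0) (hw : w i ≠ 0)
    (c : ℝ) : w i * ∑ j ∈ s, A i j * (c / w j) = c := by
  rw [sum_eq_single_of_mem i hi fun j hj hji => by rw [hindep j hj hji.symm, zero_mul],
    hdiag, one_mul, mul_div_cancel₀ c hw]

theorem le_inv_sq_weights_payoff_of_adj {w : ι → ℝ} {A : Matrix ι ι ℝ} {s : Finset ι}
    {i j : ι} {c : ℝ} (hc : 0 ≤ c) (hA : ∀ k ∈ s, 0 ≤ A i k) (hw : ∀ k ∈ s, 0 < w k)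
    (hj : j ∈ s) (hij : A i j = 1) (hwij : w j ≤ w i) :
    c ≤ w i * ∑ k ∈ s, A i k * (c / w k) := by
  have hwi : 0 ≤ w i := (hw j hj).le.trans hwij
  have hterm : ∀ k ∈ s, 0 ≤ A i k * (c / w k) := fun k hk =>
    mul_nonneg (hA k hk) (div_nonneg hc (hw k hk).le)
  calc c = w j * (c / w j) := (mul_div_cancel₀ c (hw j hj).ne').symm
    _ ≤ w i * (c / w j) := mul_le_mul_of_nonneg_right hwij (div_nonneg hc (hw j hj).le)
    _ = w i * (A i j * (c / w j)) := by rw [hij, one_mul]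
    _ ≤ w i * ∑ k ∈ s, A i k * (c / w k) :=
      mul_le_mul_of_nonneg_left (single_le_sum hterm hj) hwi

end Payoff

theorem stmt_14_general (n : ℕ) (A : Matrix (Fin n) (Fin n) ℝ)
    (h01 : ∀ i j, A i j = 0 ∨ A i j = 1)
    (hdiag : ∀ i, A i i = 1)
    (w : Fin n → ℝ) (hw : ∀ i, 1 ≤ w i)
    (At : Matrix (Fin n) (Fin n) ℝ)
    (hAt : At =
      Matrix.diagonal w * A * Matrix.diagonal w)
    (Vs : Finset (Fin n)) (hne : Vs.Nonempty)
    (hindep : ∀ i ∈ Vs, ∀ j ∈ Vs, i ≠ j → A i j = 0)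
    (hmax : ∀ i, i ∉ Vs → ∃ j ∈ Vs, A i j = 1 ∧ w j ≤ w i)
    (wbar : ℝ) (hwbar : wbar = (∑ i ∈ Vs, ((w i) ^ 2)⁻¹)⁻¹)
    (xstar : Fin n → ℝ)
    (hxstar : xstar = fun i => if i ∈ Vs then wbar / (w i) ^ 2 else 0) :
    xstar ∈ stdSimplex ℝ (Fin n) ∧
    (∀ x ∈ stdSimplex ℝ (Fin n),
        xstar ⬝ᵥ At.mulVec xstar ≤ x ⬝ᵥ At.mulVec xstar) ∧
    xstar ⬝ᵥ At.mulVec xstar = wbar := by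
  subst hAt hxstar
  have hw0 : ∀ i, 0 < w i := fun i => one_pos.trans_le (hw i)
  have hA0 : ∀ i j, 0 ≤ A i j := fun i j => by rcases h01 i j with h | h <;> simp [h]
  have hwbar0 : 0 ≤ wbar := hwbar ▸ by positivity
  have hmem := hwbar ▸ mem_stdSimplex_inv_sq_weights hne fun i _ => (hw0 i).ne'
  have hpay := mulVec_inv_sq_weights_apply w A (s := Vs) (fun j _ => (hw0 j).ne') wbar
  have hVs : ∀ i ∈ Vs, w i * ∑ j ∈ Vs, A i j * (wbar / w j) = wbar := fun i hi =>
    inv_sq_weights_payoff_of_mem hi (hdiag i) (hindep i hi) (hw0 i).ne' wbar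
  obtain ⟨hnash, hval⟩ := isNashEquilibrium_of_support _ hmem (c := wbar)
    (fun i => by
      rw [hpay]
      by_cases hi : i ∈ Vs
      · exact (hVs i hi).ge
      · obtain ⟨j, hj, hij, hwij⟩ := hmax i hi
        exact le_inv_sq_weights_payoff_of_adj hwbar0 (fun k _ => hA0 i k) (fun k _ => hw0 k)
          hj hij hwij)
    (fun i hi => by
      rw [hpay]
      exact hVs i (by by_contra h; simp [h] at hi))
  exact ⟨hmem, hnash, hval⟩

/-- Theorem 4.3: with multiplicative weights Ã = WAW, the strategy with
x*_i = w̃²/w_i² on a maximal independent set V* (where 1/w̃² = Σ_{i∈V*} 1/w_i²),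
provided every outside node has a neighbor in V* of no larger weight, is a
Nash equilibrium with value λ* = w̃². -/
theorem stmt_14 (n : ℕ) (A : Matrix (Fin n) (Fin n) ℝ)
    (hsym : A.IsSymm)
    (h01 : ∀ i j, A i j = 0 ∨ A i j = 1)
    (hdiag : ∀ i, A i i = 1)
    (w : Fin n → ℝ) (hw : ∀ i, 1 ≤ w i)
    (At : Matrix (Fin n) (Fin n) ℝ)
    (hAt : At =
      Matrix.diagonal w * A * Matrix.diagonal w)
    (Vs : Finset (Fin n)) (hne : Vs.Nonempty)
    (hindep : ∀ i ∈ Vs, ∀ j ∈ Vs, i ≠ j → A i j = 0)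
    (hmax : ∀ i, i ∉ Vs → ∃ j ∈ Vs, A i j = 1 ∧ w j ≤ w i)
    (wbar : ℝ) (hwbar : wbar = (∑ i ∈ Vs, ((w i) ^ 2)⁻¹)⁻¹)
    (xstar : Fin n → ℝ)
    (hxstar : xstar = fun i => if i ∈ Vs then wbar / (w i) ^ 2 else 0) :
    xstar ∈ stdSimplex ℝ (Fin n) ∧
    (∀ x ∈ stdSimplex ℝ (Fin n),
        xstar ⬝ᵥ At.mulVec xstar ≤ x ⬝ᵥ At.mulVec xstar) ∧
    xstar ⬝ᵥ At.mulVec xstar = wbar :=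
  stmt_14_general n A h01 hdiag w hw At hAt Vs hne hindep hmax wbar hwbar xstar hxstar
end

section
/- Suppose G* is a maximal r-regular induced subgraph of G whose connected components G*_1,…,G*_m have vertex sets V*_1,…,V*_m of sizes m_1,…,m_k, with all vertices in component k assigned the same weight w'_k, and suppose every vertex i ∉ V* has at least r+1 neighbors j ∈ V* with w_i ≥ w_j. With additive weighting Ã = (WA+AW)/2, the strategy x* with x*_i = w̄/w'_k for i ∈ V*_k (where 1/w̄ = Σ_k m_k/w'_k) and 0 elsewhere is a Nash equilibrium with λ* = (r+1)w̄. -/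
open Matrix Finset

/-- Theorem 4.4: additive weighting on a maximal r-regular subnetwork whose
components carry constant weights. The strategy x*_i = w̄/w'_k on component k
(with 1/w̄ = Σ_k m_k/w'_k) is a Nash equilibrium with value λ* = (r+1)w̄. -/
theorem stmt_15 (n : ℕ) (A : Matrix (Fin n) (Fin n) ℝ)
    (hsym : A.IsSymm)
    (h01 : ∀ i j, A i j = 0 ∨ A i j = 1)
    (hdiag : ∀ i, A i i = 1)
    (w : Fin n → ℝ) (hw : ∀ i, 1 ≤ w i)
    (At : Matrix (Fin n) (Fin n) ℝ)
    (hAt : At = (2 : ℝ)⁻¹ •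
      (Matrix.diagonal w * A + A * Matrix.diagonal w))
    (r : ℕ) (m : ℕ) (comps : Fin m → Finset (Fin n))
    (hdisj : ∀ k l, k ≠ l → Disjoint (comps k) (comps l))
    (Vs : Finset (Fin n)) (hVs : Vs = Finset.univ.biUnion comps)
    (hne : Vs.Nonempty)
    (hcompne : ∀ k, (comps k).Nonempty)
    (hreg : ∀ k, ∀ i ∈ comps k,
        ((comps k).filter (fun j => j ≠ i ∧ A i j = 1)).card = r)
    (hcross : ∀ k l, k ≠ l → ∀ i ∈ comps k, ∀ j ∈ comps l, A i j = 0)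
    (w' : Fin m → ℝ) (hw' : ∀ k, 1 ≤ w' k)
    (hcompw : ∀ k, ∀ i ∈ comps k, w i = w' k)
    (hout : ∀ i, i ∉ Vs →
        r + 1 ≤ (Vs.filter (fun j => A i j = 1 ∧ w j ≤ w i)).card)
    (wbar : ℝ) (hwbar : wbar = (∑ k, ((comps k).card : ℝ) / w' k)⁻¹)
    (xstar : Fin n → ℝ)
    (hxstar : ∀ k, ∀ i ∈ comps k, xstar i = wbar / w' k)
    (hxstar0 : ∀ i, i ∉ Vs → xstar i = 0) :
    xstar ∈ stdSimplex ℝ (Fin n) ∧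
    (∀ x ∈ stdSimplex ℝ (Fin n),
        xstar ⬝ᵥ At.mulVec xstar ≤ x ⬝ᵥ At.mulVec xstar) ∧
    xstar ⬝ᵥ At.mulVec xstar = (r + 1 : ℝ) * wbar := by

  have hApos : ∀ i j, 0 ≤ A i j := fun i j => by rcases h01 i j with h|h <;> simp [h]
  have hwpos : ∀ i, 0 < w i := fun i => lt_of_lt_of_le one_pos (hw i)
  have hw'pos : ∀ k, 0 < w' k := fun k => lt_of_lt_of_le one_pos (hw' k)
  obtain ⟨i0, hi0⟩ := hne
  rw [hVs, Finset.mem_biUnion] at hi0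
  obtain ⟨k0, -, hk0⟩ := hi0
  have hSpos : 0 < ∑ k, ((comps k).card : ℝ) / w' k := by
    apply Finset.sum_pos
    · intro k _
      apply div_pos _ (hw'pos k)
      exact_mod_cast Finset.card_pos.2 (hcompne k)
    · exact ⟨k0, Finset.mem_univ k0⟩
  have hwbarpos : 0 < wbar := by rw [hwbar]; exact inv_pos.2 hSpos
  have hxnn : ∀ i, 0 ≤ xstar i := by
    intro i
    by_cases h : i ∈ Vs
    · rw [hVs, Finset.mem_biUnion] at h
      obtain ⟨k, -, hk⟩ := h
      rw [hxstar k i hk]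
      exact le_of_lt (div_pos hwbarpos (hw'pos k))
    · rw [hxstar0 i h]
  have hsumV : ∀ f : Fin n → ℝ, ∑ j ∈ Vs, f j = ∑ k, ∑ j ∈ comps k, f j := by
    intro f; rw [hVs]; exact Finset.sum_biUnion (fun k _ l _ hkl => hdisj k l hkl)
  have hxsum : ∑ i, xstar i = 1 := by
    rw [← Finset.sum_subset (Finset.subset_univ Vs) (fun i _ hi => hxstar0 i hi)]
    rw [hsumV]
    have hck : ∀ k, ∑ j ∈ comps k, xstar j = ((comps k).card : ℝ) / w' k * wbar := by
      intro k
      rw [Finset.sum_congr rfl (fun j hj => hxstar k j hj), Finset.sum_const, nsmul_eq_mul]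
      field_simp
    rw [Finset.sum_congr rfl (fun k _ => hck k), ← Finset.sum_mul, hwbar,
      mul_inv_cancel₀ hSpos.ne']
  have hmv : ∀ i, At.mulVec xstar i = ∑ j ∈ Vs, A i j * ((w i + w j) / 2) * xstar j := by
    intro i
    rw [Matrix.mulVec, dotProduct,
      ← Finset.sum_subset (Finset.subset_univ Vs)
        (fun j _ hj => by rw [hxstar0 j hj, mul_zero])]
    refine Finset.sum_congr rfl fun j hj => ?_
    rw [hAt]
    simp only [Matrix.smul_apply, Matrix.add_apply, Matrix.diagonal_mul, Matrix.mul_diagonal,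
      smul_eq_mul]
    ring
  have hsum01 : ∀ (s : Finset (Fin n)) i, ∑ j ∈ s, A i j
      = ((s.filter (fun j => A i j = 1)).card : ℝ) := by
    intro s i
    rw [Finset.card_filter]
    push_cast
    refine Finset.sum_congr rfl fun j _ => ?_
    rcases h01 i j with h | h <;> simp [h]
  have hcount : ∀ k, ∀ i ∈ comps k, ∑ j ∈ comps k, A i j = (r : ℝ) + 1 := by
    intro k i hi
    rw [show comps k = insert i ((comps k).erase i) from (Finset.insert_erase hi).symm,
      Finset.sum_insert (Finset.notMem_erase i _), hdiag]
    have hfe : ((comps k).erase i).filter (fun j => A i j = 1)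
        = (comps k).filter (fun j => j ≠ i ∧ A i j = 1) := by
      ext j
      simp only [Finset.mem_filter, Finset.mem_erase]
      tauto
    have h2 : ∑ j ∈ (comps k).erase i, A i j = (r : ℝ) := by
      rw [hsum01, hfe, hreg k i hi]
    rw [h2]; ring
  have hval : ∀ k, ∀ i ∈ comps k, At.mulVec xstar i = ((r : ℝ) + 1) * wbar := by
    intro k i hi
    rw [hmv, hsumV, Finset.sum_eq_single k]
    · have hterm : ∀ j ∈ comps k, A i j * ((w i + w j) / 2) * xstar j = A i j * wbar := by
        intro j hj
        rw [hcompw k i hi, hcompw k j hj, hxstar k j hj]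
        have h2 : w' k ≠ 0 := (hw'pos k).ne'
        field_simp
        ring
      rw [Finset.sum_congr rfl hterm, ← Finset.sum_mul, hcount k i hi]
    · intro l _ hlk
      refine Finset.sum_eq_zero fun j hj => ?_
      rw [hcross k l hlk.symm i hi j hj, zero_mul, zero_mul]
    · intro h; exact absurd (Finset.mem_univ k) h
  have hge : ∀ i, ((r : ℝ) + 1) * wbar ≤ At.mulVec xstar i := by
    intro i
    by_cases hiV : i ∈ Vs
    · obtain ⟨k, -, hk⟩ := Finset.mem_biUnion.1 (hVs ▸ hiV)
      rw [hval k i hk]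
    · rw [hmv]
      have hterm_nn : ∀ j ∈ Vs, 0 ≤ A i j * ((w i + w j) / 2) * xstar j := by
        intro j _
        refine mul_nonneg (mul_nonneg (hApos i j) ?_) (hxnn j)
        have := hwpos i; have := hwpos j; linarith
      have h1 : ∑ _j ∈ Vs.filter (fun j => A i j = 1 ∧ w j ≤ w i), wbar
          ≤ ∑ j ∈ Vs.filter (fun j => A i j = 1 ∧ w j ≤ w i),
              A i j * ((w i + w j) / 2) * xstar j := by
        refine Finset.sum_le_sum fun j hj => ?_
        rw [Finset.mem_filter] at hj
        obtain ⟨hjV, hA1, hwle⟩ := hj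
        obtain ⟨k, -, hk⟩ := Finset.mem_biUnion.1 (hVs ▸ hjV)
        rw [hA1, one_mul, hxstar k j hk, ← hcompw k j hk]
        have hwj := hwpos j
        have hmid : w j ≤ (w i + w j) / 2 := by linarith
        calc wbar = w j * (wbar / w j) := by field_simp
          _ ≤ (w i + w j) / 2 * (wbar / w j) :=
            mul_le_mul_of_nonneg_right hmid (le_of_lt (div_pos hwbarpos hwj))
      have h2 : ∑ j ∈ Vs.filter (fun j => A i j = 1 ∧ w j ≤ w i),
            A i j * ((w i + w j) / 2) * xstar j
          ≤ ∑ j ∈ Vs, A i j * ((w i + w j) / 2) * xstar j :=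
        Finset.sum_le_sum_of_subset_of_nonneg (Finset.filter_subset _ _)
          (fun j hj _ => hterm_nn j hj)
      have h3 : ((r : ℝ) + 1) * wbar
          ≤ ∑ _j ∈ Vs.filter (fun j => A i j = 1 ∧ w j ≤ w i), wbar := by
        rw [Finset.sum_const, nsmul_eq_mul]
        refine mul_le_mul_of_nonneg_right ?_ hwbarpos.le
        exact_mod_cast hout i hiV
      linarith
  have hvalx : xstar ⬝ᵥ At.mulVec xstar = ((r : ℝ) + 1) * wbar := by
    rw [dotProduct,
      ← Finset.sum_subset (Finset.subset_univ Vs)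
        (fun i _ hi => by rw [hxstar0 i hi, zero_mul])]
    have hc : ∀ i ∈ Vs, xstar i * At.mulVec xstar i = xstar i * (((r : ℝ) + 1) * wbar) := by
      intro i hi
      obtain ⟨k, -, hk⟩ := Finset.mem_biUnion.1 (hVs ▸ hi)
      rw [hval k i hk]
    rw [Finset.sum_congr rfl hc, ← Finset.sum_mul,
      Finset.sum_subset (Finset.subset_univ Vs) (fun i _ hi => hxstar0 i hi), hxsum, one_mul]
  refine ⟨⟨hxnn, hxsum⟩, ?_, by rw [hvalx]⟩
  intro x hx
  rw [hvalx, dotProduct]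
  calc ((r : ℝ) + 1) * wbar = ∑ i, x i * (((r : ℝ) + 1) * wbar) := by
        rw [← Finset.sum_mul, hx.2, one_mul]
    _ ≤ ∑ i, x i * At.mulVec xstar i :=
        Finset.sum_le_sum fun i _ => mul_le_mul_of_nonneg_left (hge i) (hx.1 i)
end
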